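/- Let ξ be an F_T-measurable random variable. Then B^{2,0}(ξ) ≠ ∅ if and only if there exists a probability measure Q equivalent to P such that E_Q[|ξ|] < ∞ and B^{2,1}_Q(ξ) ≠ ∅; that is, ξ admits a representation ∫₀^T β_u du = ξ a.s. with ∫₀^T β_u² du < ∞ a.s. if and only if it admits such a representation with E_Q[∫₀^T β_u² du] < ∞ under some equivalent probability Q integrating ξ. -/

import Mathlib

open MeasureTheory Filter Set
open scoped ENNReal Topology

/-- `β ∈ B^{2,0}(ξ)` (under `μ`) : `β` is progressively measurable,
`∫₀^T β_u² du < ∞` a.s., and `∫₀^T β_u du = ξ` almost surely. -/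
def MemB20 {Ω : Type*} {mΩ : MeasurableSpace Ω} (μ : Measure Ω) (ℱ : Filtration ℝ mΩ)
    (T : ℝ) (ξ : Ω → ℝ) (β : ℝ → Ω → ℝ) : Prop :=
  ProgMeasurable ℱ β ∧
  (∀ᵐ ω ∂μ, (∫⁻ u in Set.Ioc (0:ℝ) T, ENNReal.ofReal ((β u ω)^2)) < ⊤) ∧
  ∀ᵐ ω ∂μ, ∫ u in Set.Ioc (0:ℝ) T, β u ω = ξ ω

/-- `β ∈ B^{2,1}_Q(ξ)` : `β` is progressively measurable, `E_Q[∫₀^T β_u² du] < ∞`,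
and `∫₀^T β_u du = ξ` `Q`-almost surely. -/
def MemB21 {Ω : Type*} {mΩ : MeasurableSpace Ω} (Q : Measure Ω) (ℱ : Filtration ℝ mΩ)
    (T : ℝ) (ξ : Ω → ℝ) (β : ℝ → Ω → ℝ) : Prop :=
  ProgMeasurable ℱ β ∧
  (∫⁻ ω, (∫⁻ u in Set.Ioc (0:ℝ) T, ENNReal.ofReal ((β u ω)^2)) ∂Q) < ⊤ ∧
  ∀ᵐ ω ∂Q, ∫ u in Set.Ioc (0:ℝ) T, β u ω = ξ ω

/-!
If `g ≥ 0` is finite `P`-a.s., the measure `Q` with density proportional to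
`(1 + g)⁻¹` is equivalent to `P` and integrates `g`. Applied to `g = |ξ| + ∫₀^T β_u² du` this
turns any `β ∈ B^{2,0}(ξ)` into an element of `B^{2,1}_Q(ξ)` with `ξ ∈ L¹(Q)`. Conversely, a
`Q`-integrable function is finite `Q`-a.s., hence `P`-a.s.
-/

section EquivalentMeasure

variable {Ω : Type*} {mΩ : MeasurableSpace Ω} {μ : Measure Ω}

lemma ENNReal.inv_one_add_mul_le_one (x : ℝ≥0∞) : (1 + x)⁻¹ * x ≤ 1 := by
  rw [mul_comm, ← div_eq_mul_inv]
  exact ENNReal.div_le_of_le_mul (by rw [one_mul]; exact le_add_self)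

theorem exists_isProbabilityMeasure_equiv_lintegral_lt_top [IsFiniteMeasure μ] [NeZero μ]
    {g : Ω → ℝ≥0∞} (hg : AEMeasurable g μ) (hg_fin : ∀ᵐ ω ∂μ, g ω ≠ ∞) :
    ∃ Q : Measure Ω, IsProbabilityMeasure Q ∧ Q ≪ μ ∧ μ ≪ Q ∧ ∫⁻ ω, g ω ∂Q < ∞ := by
  set f : Ω → ℝ≥0∞ := fun ω ↦ (1 + g ω)⁻¹
  set ν := μ.withDensity f
  have hf : AEMeasurable f μ := (aemeasurable_const.add hg).inv
  have hμν : μ ≪ ν := withDensity_absolutelyContinuous' hf <| hg_fin.mono fun ω hω ↦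
    ENNReal.inv_ne_zero.2 (ENNReal.add_ne_top.2 ⟨ENNReal.one_ne_top, hω⟩)
  have hfg : ∫⁻ ω, f ω * g ω ∂μ ≤ μ univ := by
    simpa using lintegral_mono fun ω ↦ ENNReal.inv_one_add_mul_le_one (g ω)
  have : IsFiniteMeasure ν := isFiniteMeasure_withDensity <| ne_top_of_le_ne_top
    (measure_ne_top μ univ)
    (by simpa using lintegral_mono fun ω ↦ ENNReal.inv_le_one.2 le_self_add)
  have : NeZero ν := ⟨fun h ↦ NeZero.ne μ (Measure.absolutelyContinuous_zero_iff.1 (h ▸ hμν))⟩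
  have hν_inv : (ν univ)⁻¹ ≠ 0 := ENNReal.inv_ne_zero.2 (measure_ne_top ν univ)
  refine ⟨(ν univ)⁻¹ • ν, inferInstance, (withDensity_absolutelyContinuous μ f).smul_left _,
    hμν.trans (Measure.absolutelyContinuous_smul hν_inv), ?_⟩
  calc ∫⁻ ω, g ω ∂(ν univ)⁻¹ • ν = (ν univ)⁻¹ * ∫⁻ ω, f ω * g ω ∂μ := by
        rw [lintegral_smul_measure, lintegral_withDensity_eq_lintegral_mul₀ hf hg, smul_eq_mul]
        rfl
    _ ≤ (ν univ)⁻¹ * μ univ := by gcongr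
    _ < ∞ := ENNReal.mul_lt_top (ENNReal.inv_lt_top.2 (NeZero.pos _)) (measure_lt_top μ univ)

end EquivalentMeasure

namespace MeasureTheory.IsStronglyProgressive

variable {Ω ι E : Type*} {mΩ : MeasurableSpace Ω}
  [LinearOrder ι] [TopologicalSpace ι] [MeasurableSpace ι] [OpensMeasurableSpace ι]
  [SecondCountableTopology ι] [OrderClosedTopology ι]
  [TopologicalSpace E] [TopologicalSpace.PseudoMetrizableSpace E] [MeasurableSpace E]
  [BorelSpace E]
  {ℱ : Filtration ι mΩ} {β : ι → Ω → E}

lemma measurable_comp_min (hβ : IsStronglyProgressive ℱ β) (T : ι) :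
    Measurable fun p : ι × Ω ↦ β (min p.1 T) p.2 := by
  have hβT : Measurable fun p : Iic T × Ω ↦ β p.1 p.2 :=
    ((hβ T).mono (sup_le_sup_left (MeasurableSpace.comap_mono (ℱ.le T)) _)).measurable
  exact hβT.comp (((measurable_fst.min measurable_const).subtype_mk
    (h := fun p : ι × Ω ↦ min_le_right p.1 T)).prodMk measurable_snd)

lemma measurable_setLIntegral (hβ : IsStronglyProgressive ℱ β)
    {ν : Measure ι} [SFinite ν] {F : E → ℝ≥0∞} (hF : Measurable F) {s : Set ι} {T : ι}
    (hs : MeasurableSet s) (hsT : s ⊆ Iic T) :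
    Measurable fun ω ↦ ∫⁻ u in s, F (β u ω) ∂ν := by
  have hmin : ∀ ω, ∫⁻ u in s, F (β u ω) ∂ν = ∫⁻ u in s, F (β (min u T) ω) ∂ν := fun ω ↦
    setLIntegral_congr_fun hs fun u hu ↦ by rw [min_eq_left (hsT hu)]
  simp_rw [hmin]
  exact Measurable.lintegral_prod_left (f := fun u ω ↦ F (β (min u T) ω))
    (hF.comp (hβ.measurable_comp_min T))

end MeasureTheory.IsStronglyProgressive

theorem stmt4_general
    {Ω : Type*} {mΩ : MeasurableSpace Ω} (μ : Measure Ω) [IsProbabilityMeasure μ]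
    (ℱ : Filtration ℝ mΩ) (T : ℝ)
    (ξ : Ω → ℝ) (hξ_meas : StronglyMeasurable[ℱ T] ξ) :
    (∃ β, MemB20 μ ℱ T ξ β) ↔
      ∃ Q : Measure Ω, IsProbabilityMeasure Q ∧ Q ≪ μ ∧ μ ≪ Q ∧
        Integrable ξ Q ∧ ∃ β, MemB21 Q ℱ T ξ β := by
  have hL : ∀ β, ProgMeasurable ℱ β →
      Measurable fun ω ↦ ∫⁻ u in Ioc (0 : ℝ) T, ENNReal.ofReal (β u ω ^ 2) := fun β hβ ↦
    IsStronglyProgressive.measurable_setLIntegral (F := fun x ↦ ENNReal.ofReal (x ^ 2)) hβ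
      (by fun_prop) measurableSet_Ioc Ioc_subset_Iic_self
  constructor
  · rintro ⟨β, hβ, hβ_sq, hβ_eq⟩
    have hξ : Measurable ξ := (hξ_meas.mono (ℱ.le T)).measurable
    obtain ⟨Q, hQ, hQμ, hμQ, hQ_int⟩ := exists_isProbabilityMeasure_equiv_lintegral_lt_top
      (g := fun ω ↦ ‖ξ ω‖ₑ + ∫⁻ u in Ioc (0 : ℝ) T, ENNReal.ofReal (β u ω ^ 2))
      (hξ.enorm.add (hL β hβ)).aemeasurable
      (hβ_sq.mono fun ω hω ↦ ENNReal.add_ne_top.2 ⟨enorm_ne_top, hω.ne⟩)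
    exact ⟨Q, hQ, hQμ, hμQ,
      ⟨hξ.aestronglyMeasurable, (lintegral_mono fun _ ↦ le_self_add).trans_lt hQ_int⟩,
      β, hβ, (lintegral_mono fun _ ↦ le_add_self).trans_lt hQ_int, hQμ.ae_le hβ_eq⟩
  · rintro ⟨Q, -, -, hμQ, -, β, hβ, hβ_sq, hβ_eq⟩
    exact ⟨β, hβ, hμQ.ae_le (ae_lt_top (hL β hβ) hβ_sq.ne), hμQ.ae_le hβ_eq⟩

theorem stmt4
    {Ω : Type*} {mΩ : MeasurableSpace Ω} (μ : Measure Ω) [IsProbabilityMeasure μ]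
    (ℱ : Filtration ℝ mΩ) (T : ℝ) (hT : 0 < T)
    (ξ : Ω → ℝ) (hξ_meas : StronglyMeasurable[ℱ T] ξ) :
    (∃ β, MemB20 μ ℱ T ξ β) ↔
      ∃ Q : Measure Ω, IsProbabilityMeasure Q ∧ Q ≪ μ ∧ μ ≪ Q ∧
        Integrable ξ Q ∧ ∃ β, MemB21 Q ℱ T ξ β :=
  stmt4_general μ ℱ T ξ hξ_meas
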